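/- Let u,v ∈ W and X,Y ⊆ S be such that u is (∅,X)-minimal, v is (∅,Y)-minimal, and uW_Xu⁻¹ = vW_Yv⁻¹, where W_X and W_Y are the standard parabolic subgroups generated by X and Y. Then u(Π_X) = v(Π_Y), i.e. {u(α_s) : s ∈ X} = {v(α_t) : t ∈ Y}, where Π_X = {α_s : s ∈ X} and Π_Y = {α_t : t ∈ Y}. -/

import Mathlib

/-!
Context: `(W, S)` is a Coxeter system for the Coxeter matrix `M` (Mathlib's convention:
the entry `0` encodes `∞`).  `V = ⊕_{s ∈ S} ℝ·α_s` is realized as `S →₀ ℝ` with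
`α_s = simpleRoot s`, equipped with the canonical symmetric bilinear form `bform M`.
The canonical faithful form-preserving representation `ρ : W →* GL(V)` and the map
`β ↦ r_β` assigning to each root its reflection are given as data, characterized by
the usual formulas (`hρ`, `hρinj`, `hρform`, `hr` below).
-/

noncomputable section

open scoped Real Pointwise

variable {S W : Type*}

/-- The simple root `α_s`. -/
def simpleRoot (s : S) : S →₀ ℝ := Finsupp.single s 1

/-- The entry `⟨α_s, α_t⟩ = -cos (π / m_{s,t})` of the canonical bilinear form,
interpreted as `-1` when `m_{s,t} = ∞` (encoded by `0`). -/
def formEntry (M : CoxeterMatrix S) (s t : S) : ℝ :=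
  if M s t = 0 then -1 else -Real.cos (Real.pi / (M s t : ℝ))

/-- The canonical symmetric bilinear form on `V = ⊕_{s ∈ S} ℝ·α_s`. -/
def bform (M : CoxeterMatrix S) : (S →₀ ℝ) →ₗ[ℝ] (S →₀ ℝ) →ₗ[ℝ] ℝ :=
  Finsupp.basisSingleOne.constr ℝ fun s =>
    Finsupp.basisSingleOne.constr ℝ fun t => formEntry M s t

variable [Group W]

/-- The root system `Φ = { w (α_s) : w ∈ W, s ∈ S }`. -/
def rootSystem (ρ : W →* ((S →₀ ℝ) ≃ₗ[ℝ] (S →₀ ℝ))) : Set (S →₀ ℝ) :=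
  Set.range fun p : W × S => ρ p.1 (simpleRoot p.2)

/-- A subset `𝒳 ⊆ V` is almost parabolic (AP): (AP1) the vectors of `𝒳` are linearly
independent, and (AP2) any two elements of `𝒳` are of the form `w (α_s)`, `w (α_t)` for a
common `w ∈ W`. -/
def IsAP (ρ : W →* ((S →₀ ℝ) ≃ₗ[ℝ] (S →₀ ℝ))) (𝒳 : Set (S →₀ ℝ)) : Prop :=
  LinearIndependent ℝ ((↑) : 𝒳 → (S →₀ ℝ)) ∧
    ∀ β ∈ 𝒳, ∀ γ ∈ 𝒳, ∃ (w : W) (s t : S),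
      ρ w (simpleRoot s) = β ∧ ρ w (simpleRoot t) = γ

/-- `g ∈ W` is a product of `n` elements of `T`. -/
def HasLen (T : Set W) (g : W) (n : ℕ) : Prop :=
  ∃ l : List W, (∀ x ∈ l, x ∈ T) ∧ l.prod = g ∧ l.length = n

/-- `u` has minimal word length (w.r.t. the generating set `T`) in the coset `u·H`. -/
def MinimalInCoset (T : Set W) (H : Subgroup W) (u : W) : Prop :=
  ∀ h ∈ H, ∀ m, HasLen T (u * h) m → ∃ n ≤ m, HasLen T u n

/-!
`u (Π_X)` is recovered from `u (Φ⁺_X)` as its set of cone-indecomposable elements, so it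
suffices to show `u (Φ⁺_X) = v (Φ⁺_Y)`. Signs carry the argument: every root is positive or
negative (Humphreys, Theorem 5.4), a minimal representative `u` of `u W_X` keeps `Φ⁺_X`
positive, and an element of `W_Y` makes a positive root negative only if that root lies in
`Φ⁺_Y`. Applied to the reflection in `u β`, which lies in `u W_X u⁻¹ = v W_Y v⁻¹`, this puts
`v⁻¹ u β` into `Φ⁺_Y`.
-/

open CoxeterSystem

variable {M : CoxeterMatrix S}

lemma formEntry_comm (s t : S) : formEntry M s t = formEntry M t s := by
  simp [formEntry, M.symmetric s t]

lemma bform_simpleRoot_simpleRoot (s t : S) :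
    bform M (simpleRoot s) (simpleRoot t) = formEntry M s t := by
  have hα (x : S) : simpleRoot x = Finsupp.basisSingleOne x := by simp [simpleRoot]
  rw [bform, hα, hα, Module.Basis.constr_basis, Module.Basis.constr_basis]

lemma bform_simpleRoot_self (s : S) : bform M (simpleRoot s) (simpleRoot s) = 1 := by
  simp [bform_simpleRoot_simpleRoot, formEntry]

lemma simpleRoot_nonneg (s : S) : 0 ≤ simpleRoot s :=
  Finsupp.single_nonneg.mpr zero_le_one

lemma simpleRoot_apply_of_ne {s t : S} (h : t ≠ s) : simpleRoot s t = 0 :=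
  Finsupp.single_eq_of_ne h

/-- `sin (k θ) / sin θ = U_{k-1} (cos θ)` for `θ = π / m`; for `m = ∞` (encoded by `0`) its
limit `k` as `θ → 0`. -/
def dihedralCoeff (m k : ℕ) : ℝ :=
  if m = 0 then k else Real.sin (k * (π / m)) / Real.sin (π / m)

lemma dihedralCoeff_zero (m : ℕ) : dihedralCoeff m 0 = 0 := by
  simp [dihedralCoeff]

lemma dihedralCoeff_one {m : ℕ} (hm : m ≠ 1) : dihedralCoeff m 1 = 1 := by
  unfold dihedralCoeff
  split_ifs with h0
  · simp
  have hsin : 0 < Real.sin (π / m) := by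
    apply Real.sin_pos_of_pos_of_lt_pi (by positivity)
    rw [div_lt_iff₀ (by positivity)]
    have : (1 : ℝ) < m := by exact_mod_cast (by omega : 1 < m)
    nlinarith [Real.pi_pos]
  simp [hsin.ne']

lemma dihedralCoeff_add_two (i j : S) (k : ℕ) :
    dihedralCoeff (M i j) (k + 2) =
      -2 * formEntry M i j * dihedralCoeff (M i j) (k + 1) - dihedralCoeff (M i j) k := by
  unfold dihedralCoeff formEntry
  split_ifs
  · push_cast; ring
  · set θ := π / (M i j : ℝ)
    have h₂ : ((k + 2 : ℕ) : ℝ) * θ = ((k + 1 : ℕ) : ℝ) * θ + θ := by push_cast; ring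
    have h₀ : (k : ℝ) * θ = ((k + 1 : ℕ) : ℝ) * θ - θ := by push_cast; ring
    rw [h₂, h₀, Real.sin_add, Real.sin_sub]
    ring

lemma dihedralCoeff_nonneg {m k : ℕ} (hk : m = 0 ∨ k ≤ m) : 0 ≤ dihedralCoeff m k := by
  unfold dihedralCoeff
  split_ifs with h0
  · positivity
  have hm : (0 : ℝ) < m := by exact_mod_cast Nat.pos_of_ne_zero h0
  have hkm : (k : ℝ) ≤ m := by exact_mod_cast hk.resolve_left h0
  apply div_nonneg <;> apply Real.sin_nonneg_of_nonneg_of_le_pi (by positivity)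
  · rw [mul_div_assoc', div_le_iff₀ hm]
    nlinarith [Real.pi_pos]
  · exact div_le_self Real.pi_pos.le (by exact_mod_cast Nat.one_le_iff_ne_zero.mpr h0)

namespace CoxeterSystem

variable (cs : CoxeterSystem M W)

lemma not_isReduced_append_pair (l : List S) (x : S) : ¬ cs.IsReduced (l ++ [x, x]) := by
  intro h
  have := (h.drop l.length).eq
  simp [cs.wordProd_cons] at this

lemma isReduced_of_length_add_le {a : W} {l : List S}
    (h : cs.length a + l.length ≤ cs.length (a * cs.wordProd l)) : cs.IsReduced l := by
  have := cs.length_mul_le a (cs.wordProd l)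
  have := cs.length_wordProd_le l
  unfold IsReduced
  omega

lemma eq_alternatingWord_of_isReduced {i j : S} (hij : i ≠ j) {l : List S}
    (hl : ∀ x ∈ l, x = i ∨ x = j) (hred : cs.IsReduced (l ++ [i])) :
    l = alternatingWord i j l.length := by
  induction l using List.reverseRecOn generalizing i j with
  | nil => rfl
  | append_singleton l x ih =>
    have hxj : x = j := by
      refine (hl x (by simp)).resolve_left ?_
      rintro rfl
      exact cs.not_isReduced_append_pair l x (by simpa using hred)
    subst hxj
    have hred' : cs.IsReduced (l ++ [x]) := by
      have := hred.take (l ++ [x]).length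
      rwa [List.take_left] at this
    rw [ih hij.symm (fun y hy => (hl y (by simp [hy])).symm) hred', List.length_append,
      List.length_singleton, alternatingWord_succ, List.concat_eq_append, length_alternatingWord]

lemma exists_mul_wordProd_minimal (T : Set S) (w : W) :
    ∃ (a : W) (l : List S), (∀ x ∈ l, x ∈ T) ∧ w = a * cs.wordProd l ∧
      cs.length a + l.length = cs.length w ∧
      ∀ t ∈ T, cs.length a < cs.length (a * cs.simple t) := by
  induction hn : cs.length w using Nat.strong_induction_on generalizing w with
  | _ n ih =>
  by_cases hT : ∀ t ∈ T, cs.length w < cs.length (w * cs.simple t)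
  · exact ⟨w, [], by simp, by simp, by simp [hn], hT⟩
  push Not at hT
  obtain ⟨t, ht, hle⟩ := hT
  have hlt : cs.length (w * cs.simple t) + 1 = n := by
    have := cs.length_mul_simple w t
    omega
  obtain ⟨a, l, hl, hw, hlen, hmin⟩ := ih _ (by omega) (w * cs.simple t) rfl
  refine ⟨a, l ++ [t], ?_, ?_, by simp; omega, hmin⟩
  · simpa [or_imp, forall_and] using ⟨hl, ht⟩
  · rw [cs.wordProd_append, cs.wordProd_singleton, ← mul_assoc, ← hw,
      cs.simple_mul_simple_cancel_right]

end CoxeterSystem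

def IsGeometricRep (cs : CoxeterSystem M W) (ρ : W →* ((S →₀ ℝ) ≃ₗ[ℝ] (S →₀ ℝ))) : Prop :=
  ∀ (s : S) (v : S →₀ ℝ), ρ (cs.simple s) v = v - (2 * bform M (simpleRoot s) v) • simpleRoot s

namespace IsGeometricRep

variable {cs : CoxeterSystem M W} {ρ : W →* ((S →₀ ℝ) ≃ₗ[ℝ] (S →₀ ℝ))}

lemma apply_simpleRoot_self (hρ : IsGeometricRep cs ρ) (i : S) :
    ρ (cs.simple i) (simpleRoot i) = -simpleRoot i := by
  rw [hρ, bform_simpleRoot_self]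
  module

lemma simple_apply_of_ne (hρ : IsGeometricRep cs ρ) {s t : S} (h : t ≠ s) (v : S →₀ ℝ) :
    ρ (cs.simple s) v t = v t := by
  simp [hρ s v, simpleRoot_apply_of_ne h]

lemma simple_apply_smul_add_smul (hρ : IsGeometricRep cs ρ) (i j : S) (x y : ℝ) :
    ρ (cs.simple j) (x • simpleRoot i + y • simpleRoot j) =
      x • simpleRoot i + (-2 * formEntry M i j * x - y) • simpleRoot j := by
  rw [hρ, map_add, map_smul, map_smul, bform_simpleRoot_simpleRoot, bform_simpleRoot_self,
    formEntry_comm]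
  module

lemma wordProd_alternatingWord_apply (hρ : IsGeometricRep cs ρ) {i j : S} (hij : i ≠ j)
    (p : ℕ) :
    ρ (cs.wordProd (alternatingWord i j p)) (simpleRoot i) =
      if Even p then
        dihedralCoeff (M i j) (p + 1) • simpleRoot i + dihedralCoeff (M i j) p • simpleRoot j
      else
        dihedralCoeff (M i j) p • simpleRoot i + dihedralCoeff (M i j) (p + 1) • simpleRoot j := by
  induction p with
  | zero =>
    simp [alternatingWord, dihedralCoeff_one (M.off_diagonal i j hij), dihedralCoeff_zero]
  | succ p ih =>
    rw [alternatingWord_succ', cs.wordProd_cons, map_mul, LinearEquiv.mul_apply, ih]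
    rcases Nat.even_or_odd p with hp | hp
    · have hp' : ¬ Even (p + 1) := by simpa [Nat.even_add_one] using hp
      rw [if_pos hp, if_pos hp, if_neg hp', hρ.simple_apply_smul_add_smul,
        ← dihedralCoeff_add_two]
    · have hp' : ¬ Even p := Nat.not_even_iff_odd.mpr hp
      have hp'' : Even (p + 1) := hp.add_one
      rw [if_neg hp', if_neg hp', if_pos hp'', add_comm,
        hρ.simple_apply_smul_add_smul, formEntry_comm,
        ← dihedralCoeff_add_two, add_comm]

lemma exists_nonneg_of_isReduced (hρ : IsGeometricRep cs ρ) {i j : S} (hij : i ≠ j)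
    {l : List S} (hl : ∀ x ∈ l, x = i ∨ x = j) (hred : cs.IsReduced (l ++ [i])) :
    ∃ c d : ℝ, 0 ≤ c ∧ 0 ≤ d ∧
      ρ (cs.wordProd l) (simpleRoot i) = c • simpleRoot i + d • simpleRoot j := by
  have hl' := cs.eq_alternatingWord_of_isReduced hij hl hred
  set p := l.length
  have hp : M i j = 0 ∨ p + 1 ≤ M i j := by
    by_contra! h
    refine cs.not_isReduced_alternatingWord j i (m := p + 1) ?_ ?_ ?_
    · rw [M.symmetric]; exact h.1
    · rw [M.symmetric]; omega
    · rwa [alternatingWord_succ, List.concat_eq_append, ← hl']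
  have hp₀ : M i j = 0 ∨ p ≤ M i j := hp.imp_right (by omega)
  rw [hl', hρ.wordProd_alternatingWord_apply hij]
  split_ifs
  · exact ⟨_, _, dihedralCoeff_nonneg hp, dihedralCoeff_nonneg hp₀, rfl⟩
  · exact ⟨_, _, dihedralCoeff_nonneg hp₀, dihedralCoeff_nonneg hp, rfl⟩

/-- Humphreys, *Reflection groups and Coxeter groups*, Theorem 5.4: reduce to the dihedral
subgroup `⟨s_i, s_j⟩` for a right descent `s_j` of `w`. -/
theorem nonneg_apply_simpleRoot (hρ : IsGeometricRep cs ρ) {w : W} {i : S}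
    (h : cs.length w < cs.length (w * cs.simple i)) : 0 ≤ ρ w (simpleRoot i) := by
  induction hn : cs.length w using Nat.strong_induction_on generalizing w i with
  | _ n ih =>
  rcases eq_or_ne w 1 with rfl | hw
  · simpa using simpleRoot_nonneg i
  obtain ⟨j, hj⟩ := cs.exists_rightDescent_of_ne_one hw
  have hij : i ≠ j := by rintro rfl; exact lt_asymm h hj
  obtain ⟨a, l, hl, rfl, hlen, hmin⟩ := cs.exists_mul_wordProd_minimal {i, j} (w := w)
  have hl₀ : l ≠ [] := by
    rintro rfl
    simp only [cs.wordProd_nil, mul_one, IsRightDescent] at hj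
    exact lt_asymm hj (hmin j (by simp))
  have ha : cs.length a < n := by
    have := List.length_pos_iff.mpr hl₀
    omega
  have hred : cs.IsReduced (l ++ [i]) := by
    apply cs.isReduced_of_length_add_le (a := a)
    rw [cs.wordProd_append, cs.wordProd_singleton, ← mul_assoc, List.length_append,
      List.length_singleton]
    have := cs.length_mul_simple (a * cs.wordProd l) i
    omega
  obtain ⟨c, d, hc, hd, hcd⟩ := hρ.exists_nonneg_of_isReduced hij hl hred
  rw [map_mul, LinearEquiv.mul_apply, hcd, map_add, map_smul, map_smul]
  exact add_nonneg (smul_nonneg hc (ih _ ha (hmin i (by simp)) rfl))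
    (smul_nonneg hd (ih _ ha (hmin j (by simp)) rfl))

theorem nonneg_or_nonpos_of_mem_rootSystem (hρ : IsGeometricRep cs ρ) {β : S →₀ ℝ}
    (hβ : β ∈ rootSystem ρ) : 0 ≤ β ∨ β ≤ 0 := by
  obtain ⟨⟨w, i⟩, rfl⟩ := hβ
  rcases lt_or_gt_of_ne (cs.length_mul_simple_ne w i) with h | h
  · right
    have h' : cs.length (w * cs.simple i) < cs.length (w * cs.simple i * cs.simple i) := by
      rwa [cs.simple_mul_simple_cancel_right]
    have := hρ.nonneg_apply_simpleRoot h'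
    rwa [map_mul, LinearEquiv.mul_apply, hρ.apply_simpleRoot_self, map_neg, neg_nonneg] at this
  · exact .inl (hρ.nonneg_apply_simpleRoot h)

end IsGeometricRep

section Roots

variable {cs : CoxeterSystem M W} {ρ : W →* ((S →₀ ℝ) ≃ₗ[ℝ] (S →₀ ℝ))}

lemma bform_self_of_mem_rootSystem
    (hρform : ∀ (w : W) (x y : S →₀ ℝ), bform M (ρ w x) (ρ w y) = bform M x y)
    {β : S →₀ ℝ} (hβ : β ∈ rootSystem ρ) : bform M β β = 1 := by
  obtain ⟨⟨w, i⟩, rfl⟩ := hβ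
  rw [hρform, bform_simpleRoot_self]

lemma ne_zero_of_mem_rootSystem
    (hρform : ∀ (w : W) (x y : S →₀ ℝ), bform M (ρ w x) (ρ w y) = bform M x y)
    {β : S →₀ ℝ} (hβ : β ∈ rootSystem ρ) : β ≠ 0 := by
  rintro rfl
  simpa using bform_self_of_mem_rootSystem hρform hβ

lemma map_mem_rootSystem (w : W) {β : S →₀ ℝ} (hβ : β ∈ rootSystem ρ) :
    ρ w β ∈ rootSystem ρ := by
  obtain ⟨⟨w', i⟩, rfl⟩ := hβ
  exact ⟨⟨w * w', i⟩, by simp⟩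

lemma eq_simpleRoot_of_mem_rootSystem
    (hρform : ∀ (w : W) (x y : S →₀ ℝ), bform M (ρ w x) (ρ w y) = bform M x y)
    {γ : S →₀ ℝ} (hγ : γ ∈ rootSystem ρ) (h₀ : 0 ≤ γ) {s : S} (hs : ∀ t ≠ s, γ t = 0) :
    γ = simpleRoot s := by
  have hγs : γ = γ s • simpleRoot s := by
    ext t
    rcases eq_or_ne t s with rfl | ht
    · simp [simpleRoot]
    · simp [hs t ht, simpleRoot_apply_of_ne ht]
  have hnorm := bform_self_of_mem_rootSystem hρform hγ
  rw [hγs] at hnorm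
  simp only [map_smul, LinearMap.smul_apply, bform_simpleRoot_self, smul_eq_mul, mul_one] at hnorm
  have hγs₀ : 0 ≤ γ s := Finsupp.le_def.mp h₀ s
  have hone : γ s = 1 := by nlinarith
  rw [hγs, hone, one_smul]

variable (cs ρ) in
/-- The positive roots `Φ⁺_X = Φ_X ∩ Φ⁺` of the parabolic subgroup `W_X`. -/
def positiveRoots (X : Set S) : Set (S →₀ ℝ) :=
  {β | 0 ≤ β ∧ ∃ w ∈ Subgroup.closure (cs.simple '' X), ∃ i ∈ X, ρ w (simpleRoot i) = β}

lemma simpleRoot_mem_positiveRoots {X : Set S} {i : S} (hi : i ∈ X) :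
    simpleRoot i ∈ positiveRoots cs ρ X :=
  ⟨simpleRoot_nonneg i, 1, one_mem _, i, hi, by simp⟩

lemma mem_rootSystem_of_mem_positiveRoots {X : Set S} {β : S →₀ ℝ}
    (hβ : β ∈ positiveRoots cs ρ X) : β ∈ rootSystem ρ := by
  obtain ⟨-, w, -, i, -, rfl⟩ := hβ
  exact ⟨⟨w, i⟩, rfl⟩

lemma IsGeometricRep.apply_apply_of_notMem (hρ : IsGeometricRep cs ρ) {X : Set S} {w : W}
    (hw : w ∈ Subgroup.closure (cs.simple '' X)) {t : S} (ht : t ∉ X) (v : S →₀ ℝ) :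
    ρ w v t = v t := by
  induction hw using Subgroup.closure_induction generalizing v with
  | mem _ hx =>
    obtain ⟨x, hx, rfl⟩ := hx
    exact hρ.simple_apply_of_ne (by rintro rfl; exact ht hx) v
  | one => simp
  | mul _ _ _ _ ih₁ ih₂ => simp [ih₁, ih₂]
  | inv w _ ih => simpa using (ih (ρ w⁻¹ v)).symm

lemma IsGeometricRep.apply_eq_zero_of_mem_positiveRoots (hρ : IsGeometricRep cs ρ)
    {X : Set S} {β : S →₀ ℝ} (hβ : β ∈ positiveRoots cs ρ X) {t : S} (ht : t ∉ X) : β t = 0 := by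
  obtain ⟨-, w, hw, i, hi, rfl⟩ := hβ
  rw [hρ.apply_apply_of_notMem hw ht]
  exact simpleRoot_apply_of_ne (by rintro rfl; exact ht hi)

end Roots

section Cone

variable {R E F : Type*} [Semiring R] [PartialOrder R] [IsOrderedRing R]
  [AddCommMonoid E] [Module R E] [AddCommMonoid F] [Module R F]

variable (R) in
def coneIndecomposables (A : Set E) : Set E :=
  {β ∈ A | β ∉ PointedCone.hull R (A \ {β})}

lemma apply_mem_hull_image_iff {f : E →ₗ[R] F} (hf : Function.Injective f) {s : Set E} {x : E} :
    f x ∈ PointedCone.hull R (f '' s) ↔ x ∈ PointedCone.hull R s := by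
  have := Submodule.span_image (s := s) (f.restrictScalars {c : R // 0 ≤ c})
  rw [LinearMap.coe_restrictScalars] at this
  rw [PointedCone.hull, this]
  constructor
  · rintro ⟨y, hy, hxy⟩
    rwa [← hf hxy]
  · exact Submodule.mem_map_of_mem

lemma image_coneIndecomposables {f : E →ₗ[R] F} (hf : Function.Injective f) (A : Set E) :
    coneIndecomposables R (f '' A) = f '' coneIndecomposables R A := by
  have key (β : E) : f β ∈ PointedCone.hull R (f '' A \ {f β}) ↔
      β ∈ PointedCone.hull R (A \ {β}) := by
    rw [← Set.image_singleton, ← Set.image_sdiff hf, apply_mem_hull_image_iff hf]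
  ext γ
  constructor
  · rintro ⟨⟨β, hβ, rfl⟩, h⟩
    exact ⟨β, ⟨hβ, (key β).not.mp h⟩, rfl⟩
  · rintro ⟨β, ⟨hβ, h⟩, rfl⟩
    exact ⟨⟨β, hβ, rfl⟩, (key β).not.mpr h⟩

end Cone

lemma mem_hull_simpleRoot_image {X : Set S} {β : S →₀ ℝ} (h₀ : 0 ≤ β) (hX : ∀ t ∉ X, β t = 0) :
    β ∈ PointedCone.hull ℝ (simpleRoot '' X) := by
  rw [← Finsupp.sum_single β, Finsupp.sum]
  refine Submodule.sum_mem _ fun t ht => ?_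
  have htX : t ∈ X := by
    by_contra htX
    exact Finsupp.mem_support_iff.mp ht (hX t htX)
  have hα : simpleRoot t ∈ PointedCone.hull ℝ (simpleRoot '' X) :=
    PointedCone.subset_hull ⟨t, htX, rfl⟩
  have hmem := Submodule.smul_mem _ (⟨β t, Finsupp.le_def.mp h₀ t⟩ : {c : ℝ // 0 ≤ c}) hα
  simpa [simpleRoot, Nonneg.mk_smul] using hmem

lemma simpleRoot_notMem_hull {A : Set (S →₀ ℝ)} (i : S)
    (hA : ∀ γ ∈ A, 0 ≤ γ ∧ ∃ t ≠ i, γ t ≠ 0) : simpleRoot i ∉ PointedCone.hull ℝ A := by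
  suffices h : ∀ v ∈ PointedCone.hull ℝ A, 0 ≤ v ∧ ((∀ t ≠ i, v t = 0) → v = 0) from
    fun hmem => Finsupp.single_ne_zero.mpr one_ne_zero
      ((h _ hmem).2 fun t ht => simpleRoot_apply_of_ne ht)
  intro v hv
  induction hv using Submodule.span_induction with
  | mem γ hγ =>
    obtain ⟨hγ₀, t, ht, hγt⟩ := hA γ hγ
    exact ⟨hγ₀, fun h => absurd (h t ht) hγt⟩
  | zero => exact ⟨le_rfl, fun _ => rfl⟩
  | add x y _ _ hx hy =>
    refine ⟨add_nonneg hx.1 hy.1, fun h => ?_⟩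
    have hxy (t : S) (ht : t ≠ i) : x t = 0 ∧ y t = 0 := by
      have hsum : x t + y t = 0 := h t ht
      have hxt : 0 ≤ x t := Finsupp.le_def.mp hx.1 t
      have hyt : 0 ≤ y t := Finsupp.le_def.mp hy.1 t
      constructor <;> linarith
    rw [hx.2 fun t ht => (hxy t ht).1, hy.2 fun t ht => (hxy t ht).2, add_zero]
  | smul c x _ hx =>
    refine ⟨smul_nonneg c.2 hx.1, fun h => ?_⟩
    rcases eq_or_ne c 0 with rfl | hc
    · exact zero_smul _ x
    · rw [hx.2 fun t ht => ?_, smul_zero]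
      have hct : (c : ℝ) * x t = 0 := h t ht
      exact (mul_eq_zero.mp hct).resolve_left (Subtype.coe_ne_coe.mpr hc)

namespace IsGeometricRep

variable {cs : CoxeterSystem M W} {ρ : W →* ((S →₀ ℝ) ≃ₗ[ℝ] (S →₀ ℝ))}

lemma neg_mem_rootSystem (hρ : IsGeometricRep cs ρ) {β : S →₀ ℝ} (hβ : β ∈ rootSystem ρ) :
    -β ∈ rootSystem ρ := by
  obtain ⟨⟨w, i⟩, rfl⟩ := hβ
  exact ⟨⟨w * cs.simple i, i⟩, by simp [hρ.apply_simpleRoot_self]⟩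

lemma mem_hull_of_mem_positiveRoots (hρ : IsGeometricRep cs ρ) {X : Set S} {β : S →₀ ℝ}
    (hβ : β ∈ positiveRoots cs ρ X) : β ∈ PointedCone.hull ℝ (simpleRoot '' X) :=
  mem_hull_simpleRoot_image hβ.1 fun _ ht => hρ.apply_eq_zero_of_mem_positiveRoots hβ ht

lemma nonneg_apply_of_mem_positiveRoots (hρ : IsGeometricRep cs ρ) {u : W} {X : Set S}
    (humin : ∀ g ∈ Subgroup.closure (cs.simple '' X), cs.length u ≤ cs.length (u * g))
    {β : S →₀ ℝ} (hβ : β ∈ positiveRoots cs ρ X) : 0 ≤ ρ u β := by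
  have hcone : PointedCone.hull ℝ (simpleRoot '' X) ≤
      (PointedCone.positive ℝ (S →₀ ℝ)).comap (ρ u : (S →₀ ℝ) →ₗ[ℝ] (S →₀ ℝ)) := by
    rw [PointedCone.hull, Submodule.span_le]
    rintro _ ⟨s, hs, rfl⟩
    exact hρ.nonneg_apply_simpleRoot <| (humin _ (Subgroup.subset_closure ⟨s, hs, rfl⟩)).lt_of_ne
      (cs.length_mul_simple_ne u s).symm
  exact hcone (hρ.mem_hull_of_mem_positiveRoots hβ)

/-- Along a word in `Y` the sign changes at some simple reflection `s_y`, and the only positive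
root that `s_y` makes negative is `α_y`. -/
lemma mem_positiveRoots_of_apply_nonpos (hρ : IsGeometricRep cs ρ)
    (hρform : ∀ (w : W) (x y : S →₀ ℝ), bform M (ρ w x) (ρ w y) = bform M x y)
    {Y : Set S} {q : W} (hq : q ∈ Subgroup.closure (cs.simple '' Y)) {δ : S →₀ ℝ}
    (hδ : δ ∈ rootSystem ρ) (h₀ : 0 ≤ δ) (hqδ : ρ q δ ≤ 0) : δ ∈ positiveRoots cs ρ Y := by
  have step : ∀ y ∈ Y, ∀ q ∈ Subgroup.closure (cs.simple '' Y),
      (ρ q δ ≤ 0 → δ ∈ positiveRoots cs ρ Y) →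
      ρ (cs.simple y * q) δ ≤ 0 → δ ∈ positiveRoots cs ρ Y := by
    intro y hy q hq ih hyq
    rw [map_mul, LinearEquiv.mul_apply] at hyq
    have hγ := map_mem_rootSystem q hδ
    rcases hρ.nonneg_or_nonpos_of_mem_rootSystem hγ with hγ₀ | hγ₀
    · have hγy : ρ q δ = simpleRoot y := by
        refine eq_simpleRoot_of_mem_rootSystem hρform hγ hγ₀ fun t ht => le_antisymm ?_
          (Finsupp.le_def.mp hγ₀ t)
        have := Finsupp.le_def.mp hyq t
        rwa [hρ.simple_apply_of_ne ht] at this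
      exact ⟨h₀, q⁻¹, inv_mem hq, y, hy, by rw [← hγy]; simp⟩
    · exact ih hγ₀
  induction hq using Subgroup.closure_induction_left with
  | one => exact absurd (le_antisymm (by simpa using hqδ) h₀) (ne_zero_of_mem_rootSystem hρform hδ)
  | mul_left _ hx q hq ih =>
    obtain ⟨y, hy, rfl⟩ := hx
    exact step y hy q hq ih hqδ
  | inv_mul_cancel _ hx q hq ih =>
    obtain ⟨y, hy, rfl⟩ := hx
    rw [inv_simple] at hqδ
    exact step y hy q hq ih hqδ

/-- Writing `u (w s_i w⁻¹) u⁻¹ = v q v⁻¹`, `q ∈ W_Y` negates `δ = v⁻¹ u β`, so `δ` or `-δ` lies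
in `Φ⁺_Y`; not `-δ`, which `v` would send to the negative root `-u β`. -/
lemma image_positiveRoots_subset (hρ : IsGeometricRep cs ρ)
    (hρform : ∀ (w : W) (x y : S →₀ ℝ), bform M (ρ w x) (ρ w y) = bform M x y)
    {u v : W} {X Y : Set S}
    (humin : ∀ g ∈ Subgroup.closure (cs.simple '' X), cs.length u ≤ cs.length (u * g))
    (hvmin : ∀ g ∈ Subgroup.closure (cs.simple '' Y), cs.length v ≤ cs.length (v * g))
    (hconj : Subgroup.map (MulAut.conj u).toMonoidHom (Subgroup.closure (cs.simple '' X)) =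
      Subgroup.map (MulAut.conj v).toMonoidHom (Subgroup.closure (cs.simple '' Y))) :
    ρ u '' positiveRoots cs ρ X ⊆ ρ v '' positiveRoots cs ρ Y := by
  rintro _ ⟨β, hβ, rfl⟩
  have huβ := hρ.nonneg_apply_of_mem_positiveRoots humin hβ
  obtain ⟨-, w, hw, i, hi, rfl⟩ := hβ
  obtain ⟨q, hq, hqv⟩ : u * (w * cs.simple i * w⁻¹) * u⁻¹ ∈
      Subgroup.map (MulAut.conj v).toMonoidHom (Subgroup.closure (cs.simple '' Y)) := by
    rw [← hconj]
    exact ⟨_, mul_mem (mul_mem hw (Subgroup.subset_closure ⟨i, hi, rfl⟩)) (inv_mem hw), by simp⟩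
  set δ := ρ (v⁻¹ * u * w) (simpleRoot i)
  have hδ : δ ∈ rootSystem ρ := ⟨⟨_, i⟩, rfl⟩
  have hvδ : ρ v δ = ρ u (ρ w (simpleRoot i)) := by
    simp [δ, mul_assoc]
  have hqδ : ρ q δ = -δ := by
    have hq' : q * (v⁻¹ * u * w) = v⁻¹ * u * w * cs.simple i := by
      simp only [MulEquiv.toMonoidHom_eq_coe, MonoidHom.coe_coe, MulAut.conj_apply] at hqv
      rw [show q = v⁻¹ * (v * q * v⁻¹) * v by group, hqv]
      group
    rw [← LinearEquiv.mul_apply, ← map_mul, hq', map_mul, LinearEquiv.mul_apply,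
      hρ.apply_simpleRoot_self, map_neg]
  rcases hρ.nonneg_or_nonpos_of_mem_rootSystem hδ with h | h
  · refine ⟨δ, hρ.mem_positiveRoots_of_apply_nonpos hρform hq hδ h ?_, hvδ⟩
    rwa [hqδ, neg_nonpos]
  · have hδ' := hρ.mem_positiveRoots_of_apply_nonpos hρform hq (hρ.neg_mem_rootSystem hδ)
      (neg_nonneg.mpr h) (by rwa [map_neg, hqδ, neg_neg])
    have hvδ' := hρ.nonneg_apply_of_mem_positiveRoots hvmin hδ'
    rw [map_neg, hvδ, neg_nonneg] at hvδ'
    exact absurd (le_antisymm hvδ' huβ)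
      (ne_zero_of_mem_rootSystem hρform ⟨⟨u * w, i⟩, by simp⟩)

lemma coneIndecomposables_positiveRoots (hρ : IsGeometricRep cs ρ)
    (hρform : ∀ (w : W) (x y : S →₀ ℝ), bform M (ρ w x) (ρ w y) = bform M x y) (X : Set S) :
    coneIndecomposables ℝ (positiveRoots cs ρ X) = simpleRoot '' X := by
  ext β
  constructor
  · rintro ⟨hβ, hβ'⟩
    by_contra hβX
    refine hβ' (Submodule.span_mono ?_ (hρ.mem_hull_of_mem_positiveRoots hβ))
    rintro _ ⟨s, hs, rfl⟩
    exact ⟨simpleRoot_mem_positiveRoots hs, fun h => hβX ⟨s, hs, h⟩⟩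
  · rintro ⟨i, hi, rfl⟩
    refine ⟨simpleRoot_mem_positiveRoots hi, simpleRoot_notMem_hull i ?_⟩
    rintro γ ⟨hγ, hγi⟩
    refine ⟨hγ.1, ?_⟩
    by_contra! h
    exact hγi (eq_simpleRoot_of_mem_rootSystem hρform (mem_rootSystem_of_mem_positiveRoots hγ)
      hγ.1 h)

end IsGeometricRep

theorem statement11_general
    (M : CoxeterMatrix S) (cs : CoxeterSystem M W)
    (ρ : W →* ((S →₀ ℝ) ≃ₗ[ℝ] (S →₀ ℝ)))
    (hρ : ∀ (s : S) (v : S →₀ ℝ),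
      ρ (cs.simple s) v = v - (2 * bform M (simpleRoot s) v) • simpleRoot s)
    (hρform : ∀ (w : W) (x y : S →₀ ℝ), bform M (ρ w x) (ρ w y) = bform M x y)
    (u v : W) (X Y : Set S)
    (humin : ∀ g ∈ Subgroup.closure (cs.simple '' X), cs.length u ≤ cs.length (u * g))
    (hvmin : ∀ g ∈ Subgroup.closure (cs.simple '' Y), cs.length v ≤ cs.length (v * g))
    (hconj : Subgroup.map (MulAut.conj u).toMonoidHom (Subgroup.closure (cs.simple '' X)) =
      Subgroup.map (MulAut.conj v).toMonoidHom (Subgroup.closure (cs.simple '' Y))) :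
    ⇑(ρ u) '' (simpleRoot '' X) = ⇑(ρ v) '' (simpleRoot '' Y) := by
  have hρ : IsGeometricRep cs ρ := hρ
  have hΦ : ρ u '' positiveRoots cs ρ X = ρ v '' positiveRoots cs ρ Y :=
    (hρ.image_positiveRoots_subset hρform humin hvmin hconj).antisymm
      (hρ.image_positiveRoots_subset hρform hvmin humin hconj.symm)
  rw [← hρ.coneIndecomposables_positiveRoots hρform X,
    ← hρ.coneIndecomposables_positiveRoots hρform Y]
  calc ρ u '' coneIndecomposables ℝ (positiveRoots cs ρ X)
      = coneIndecomposables ℝ (ρ u '' positiveRoots cs ρ X) :=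
        (image_coneIndecomposables (ρ u).injective _).symm
    _ = coneIndecomposables ℝ (ρ v '' positiveRoots cs ρ Y) := by rw [hΦ]
    _ = ρ v '' coneIndecomposables ℝ (positiveRoots cs ρ Y) :=
        image_coneIndecomposables (ρ v).injective _

/-- Let `u, v ∈ W` and `X, Y ⊆ S` be such that `u` is `(∅,X)`-minimal,
`v` is `(∅,Y)`-minimal, and `u W_X u⁻¹ = v W_Y v⁻¹`.  Then `u (Π_X) = v (Π_Y)`. -/
theorem statement11
    (M : CoxeterMatrix S) (cs : CoxeterSystem M W)
    (ρ : W →* ((S →₀ ℝ) ≃ₗ[ℝ] (S →₀ ℝ)))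
    (hρ : ∀ (s : S) (v : S →₀ ℝ),
      ρ (cs.simple s) v = v - (2 * bform M (simpleRoot s) v) • simpleRoot s)
    (hρinj : Function.Injective ρ)
    (hρform : ∀ (w : W) (x y : S →₀ ℝ), bform M (ρ w x) (ρ w y) = bform M x y)
    (u v : W) (X Y : Set S)
    (humin : ∀ g ∈ Subgroup.closure (cs.simple '' X), cs.length u ≤ cs.length (u * g))
    (hvmin : ∀ g ∈ Subgroup.closure (cs.simple '' Y), cs.length v ≤ cs.length (v * g))
    (hconj : Subgroup.map (MulAut.conj u).toMonoidHom (Subgroup.closure (cs.simple '' X)) =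
      Subgroup.map (MulAut.conj v).toMonoidHom (Subgroup.closure (cs.simple '' Y))) :
    ⇑(ρ u) '' (simpleRoot '' X) = ⇑(ρ v) '' (simpleRoot '' Y) :=
  statement11_general M cs ρ hρ hρform u v X Y humin hvmin hconj
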